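/- arXiv:1311.2009 — 3 statements merged into one kernel-verified Lean document; each statement's English description precedes it below -/
import Mathlib

section
/- Fix an integer k ≥ 1 and a real number β ≠ 0. Let M be a real 4k×4k Hamiltonian matrix (with respect to Ω = [[0, I_{2k}],[−I_{2k}, 0]]) such that (M² + β²·I)^{2k} = 0 and (M² + β²·I)^{2k−1} ≠ 0 (so that over ℂ, M consists of a pair of Jordan blocks of even order 2k with eigenvalues ±iβ). Then there exists a Lagrangian subspace Γ ⊆ ℝ^{4k} (i.e. dim Γ = 2k and uᵀ·Ω·v = 0 for all u, v ∈ Γ) with M·Γ ⊆ Γ. -/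
open Matrix

/-- The standard symplectic matrix `Ω = [[0, I_m],[−I_m, 0]]` on `ℝ^{2m}`. -/
noncomputable def Omega (m : ℕ) : Matrix (Fin m ⊕ Fin m) (Fin m ⊕ Fin m) ℝ :=
  Matrix.fromBlocks 0 1 (-1) 0

/-! Put `N = M² + β²` and `Γ = range Nᵏ`. Since `N` commutes with `M`, `Γ` is `M`-invariant.
Hamiltonicity makes `N` self-adjoint for the symplectic form (`Ω N = Nᵀ Ω`), so
`(Nᵏ)ᵀ Ω Nᵏ = Ω N²ᵏ = 0`: `Γ` is isotropic, hence of dimension at most `2k`.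
Conversely, `rank Nʲ - rank Nʲ⁺¹ = dim (ker N ⊓ range Nʲ)`. This space is `M`-invariant and
`M² = -β²` on it, so its dimension is even (a determinant argument); for `j < 2k` it contains
`range N²ᵏ⁻¹ ≠ 0`. So each of the `k` steps from `Nᵏ` down to `N²ᵏ = 0` loses rank at
least `2`. -/

open Module LinearMap

section LinearAlgebra

variable {K V : Type*} [Field K] [AddCommGroup V] [Module K V]

theorem Module.End.mapsTo_ker_inf_range_pow {T N : Module.End K V} (h : Commute T N) (j : ℕ) :
    ∀ x ∈ ker N ⊓ range (N ^ j), T x ∈ ker N ⊓ range (N ^ j) := by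
  rintro x ⟨hx, y, rfl⟩
  refine ⟨?_, T y, ?_⟩
  · rw [SetLike.mem_coe, mem_ker, ← Module.End.mul_apply, ← h.eq, Module.End.mul_apply,
      mem_ker.mp hx, map_zero]
  · rw [← Module.End.mul_apply, ← (h.pow_right j).eq, Module.End.mul_apply]

variable [FiniteDimensional K V]

theorem LinearMap.finrank_range_comp_add_finrank_ker_inf_range (f g : V →ₗ[K] V) :
    finrank K (range (f ∘ₗ g)) + finrank K ↥(ker f ⊓ range g) = finrank K (range g) := by
  have hker : finrank K (ker (f.domRestrict (range g))) = finrank K ↥(ker f ⊓ range g) := by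
    rw [ker_domRestrict,
      (Submodule.equivMapOfInjective _ (range g).injective_subtype _).finrank_eq,
      Submodule.map_comap_subtype, inf_comm]
  rw [range_comp, ← range_domRestrict, ← hker, finrank_range_add_finrank_ker]

theorem Module.End.even_finrank_of_mul_self_eq_neg_smul_one
    [LinearOrder K] [IsStrictOrderedRing K] {f : Module.End K V} {c : K} (hc : 0 < c)
    (hf : f * f = -c • 1) : Even (finrank K V) := by
  have hdet : LinearMap.det f * LinearMap.det f = (-c) ^ finrank K V := by
    rw [← map_mul, hf, LinearMap.det_smul, map_one, mul_one]
  by_contra hodd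
  rw [(Nat.not_even_iff_odd.mp hodd).neg_pow] at hdet
  nlinarith [mul_self_nonneg (LinearMap.det f), pow_pos hc (finrank K V)]

theorem Module.End.even_finrank_ker_inf_range_pow [LinearOrder K] [IsStrictOrderedRing K]
    (T : Module.End K V) {c : K} (hc : 0 < c) (j : ℕ) :
    Even (finrank K ↥(ker (T ^ 2 + c • 1) ⊓ range ((T ^ 2 + c • 1) ^ j))) := by
  set N := T ^ 2 + c • 1
  have hTN : Commute T N :=
    ((Commute.refl T).pow_right 2).add_right ((Commute.one_right T).smul_right c)
  refine Module.End.even_finrank_of_mul_self_eq_neg_smul_one hc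
    (f := T.restrict (Module.End.mapsTo_ker_inf_range_pow hTN j)) ?_
  ext ⟨x, hx, -⟩
  have hNx : (T ^ 2) x + c • x = 0 := hx
  change T (T x) = -c • x
  rw [← Module.End.mul_apply, ← sq, eq_neg_of_add_eq_zero_left hNx, neg_smul]

theorem Module.End.two_mul_sub_le_finrank_range_pow {N : Module.End K V} {m : ℕ}
    (hm : N ^ m = 0) (hm' : N ^ (m - 1) ≠ 0)
    (heven : ∀ j, Even (finrank K ↥(ker N ⊓ range (N ^ j)))) (j : ℕ) :
    2 * (m - j) ≤ finrank K (range (N ^ j)) := by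
  have hanti : ∀ i d, range (N ^ (i + d)) ≤ range (N ^ i) := fun i d => by
    rw [pow_add, Module.End.mul_eq_comp]; exact range_comp_le_range _ _
  have hdrop : ∀ j < m, 2 ≤ finrank K ↥(ker N ⊓ range (N ^ j)) := by
    intro j hj
    have hker : range (N ^ (m - 1)) ≤ ker N := by
      rw [range_le_ker_iff, ← Module.End.mul_eq_comp, ← pow_succ', Nat.sub_add_cancel (by omega),
        hm]
    have hrange : range (N ^ (m - 1)) ≤ range (N ^ j) := by
      simpa [Nat.add_sub_of_le (Nat.le_sub_one_of_lt hj)] using hanti j (m - 1 - j)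
    have hlast : range (N ^ (m - 1)) ≤ ker N ⊓ range (N ^ j) := le_inf hker hrange
    have hpos : 1 ≤ finrank K ↥(ker N ⊓ range (N ^ j)) :=
      Submodule.one_le_finrank_iff.mpr fun hbot =>
        hm' (range_eq_bot.mp (le_bot_iff.mp (hbot ▸ hlast)))
    obtain ⟨r, hr⟩ := heven j
    omega
  induction h : m - j generalizing j with
  | zero => simp
  | succ d ih =>
    have hstep := finrank_range_comp_add_finrank_ker_inf_range N (N ^ j)
    rw [← Module.End.mul_eq_comp, ← pow_succ'] at hstep
    have := ih (j + 1) (by omega)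
    have := hdrop j (by omega)
    omega

end LinearAlgebra

theorem Omega_transpose (m : ℕ) : (Omega m)ᵀ = -Omega m := by
  simp [Omega, fromBlocks_transpose, fromBlocks_neg]

theorem Omega_mul_self (m : ℕ) : Omega m * Omega m = -1 := by
  simp [Omega, fromBlocks_multiply, ← fromBlocks_one, fromBlocks_neg]

theorem isUnit_det_Omega (m : ℕ) : IsUnit (Omega m).det :=
  isUnit_det_of_right_inverse (B := -Omega m) (by rw [mul_neg, Omega_mul_self, neg_neg])

theorem semiconjBy_Omega_of_hamiltonian {m : ℕ} {M : Matrix (Fin m ⊕ Fin m) (Fin m ⊕ Fin m) ℝ}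
    (hM : (Omega m * M)ᵀ = Omega m * M) : SemiconjBy (Omega m) M (-Mᵀ) := by
  rw [SemiconjBy, ← hM, transpose_mul, Omega_transpose, mul_neg, neg_mul]

section MatrixForm

variable {n : Type*} [Fintype n]

theorem dotProduct_mulVec_eq_zero_of_transpose_mul_mul_eq_zero {R : Type*} [CommRing R]
    {Ω P : Matrix n n R} (h : Pᵀ * Ω * P = 0) {u v : n → R}
    (hu : u ∈ range P.mulVecLin) (hv : v ∈ range P.mulVecLin) : u ⬝ᵥ Ω *ᵥ v = 0 := by
  obtain ⟨a, rfl⟩ := hu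
  obtain ⟨b, rfl⟩ := hv
  change P *ᵥ a ⬝ᵥ Ω *ᵥ (P *ᵥ b) = 0
  rw [mulVec_mulVec, dotProduct_mulVec, ← vecMul_transpose, vecMul_vecMul, ← mul_assoc, h,
    vecMul_zero, zero_dotProduct]

variable [DecidableEq n]

theorem SemiconjBy.sq_add_smul_one_of_neg_transpose {R : Type*} [CommRing R]
    {Ω A : Matrix n n R} (h : SemiconjBy Ω A (-Aᵀ)) (c : R) :
    SemiconjBy Ω (A ^ 2 + c • 1) (A ^ 2 + c • 1)ᵀ := by
  have hsq : SemiconjBy Ω (A ^ 2) (A ^ 2)ᵀ := by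
    simpa only [neg_sq, transpose_pow] using h.pow_right 2
  simpa only [transpose_add, transpose_smul, transpose_one] using
    hsq.add_right ((SemiconjBy.one_right Ω).smul_right c)

theorem transpose_pow_mul_mul_pow_eq_zero {R : Type*} [CommRing R] {Ω N : Matrix n n R}
    (h : SemiconjBy Ω N Nᵀ) {k : ℕ} (hN : N ^ (2 * k) = 0) : (N ^ k)ᵀ * Ω * N ^ k = 0 := by
  rw [transpose_pow, ← (h.pow_right k).eq, mul_assoc, ← pow_add, ← two_mul, hN, mul_zero]

theorem two_mul_rank_le_card_of_transpose_mul_mul_eq_zero {K : Type*} [Field K]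
    {Ω P : Matrix n n K} (hΩ : IsUnit Ω.det) (h : Pᵀ * Ω * P = 0) :
    2 * P.rank ≤ Fintype.card n := by
  have := rank_add_rank_le_card_of_mul_eq_zero h
  rwa [rank_mul_eq_left_of_isUnit_det _ _ hΩ, rank_transpose, ← two_mul] at this

end MatrixForm

theorem exists_invariant_lagrangian_of_even_jordan_pair_general {k : ℕ}
    (β : ℝ) (hβ : β ≠ 0)
    (M : Matrix (Fin (2 * k) ⊕ Fin (2 * k)) (Fin (2 * k) ⊕ Fin (2 * k)) ℝ)
    (hham : (Omega (2 * k) * M)ᵀ = Omega (2 * k) * M)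
    (hnilp : (M ^ 2 + (β ^ 2) • (1 : Matrix (Fin (2 * k) ⊕ Fin (2 * k))
        (Fin (2 * k) ⊕ Fin (2 * k)) ℝ)) ^ (2 * k) = 0)
    (hnontriv : (M ^ 2 + (β ^ 2) • (1 : Matrix (Fin (2 * k) ⊕ Fin (2 * k))
        (Fin (2 * k) ⊕ Fin (2 * k)) ℝ)) ^ (2 * k - 1) ≠ 0) :
    ∃ Γ : Submodule ℝ (Fin (2 * k) ⊕ Fin (2 * k) → ℝ),
      Module.finrank ℝ Γ = 2 * k ∧
      (∀ u ∈ Γ, ∀ v ∈ Γ, u ⬝ᵥ (Omega (2 * k)).mulVec v = 0) ∧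
      (∀ u ∈ Γ, M.mulVec u ∈ Γ) := by
  set N := M ^ 2 + (β ^ 2) • (1 : Matrix (Fin (2 * k) ⊕ Fin (2 * k))
    (Fin (2 * k) ⊕ Fin (2 * k)) ℝ)
  have hiso : (N ^ k)ᵀ * Omega (2 * k) * N ^ k = 0 :=
    transpose_pow_mul_mul_pow_eq_zero
      ((semiconjBy_Omega_of_hamiltonian hham).sq_add_smul_one_of_neg_transpose _) hnilp
  have hupper : 2 * (N ^ k).rank ≤ 2 * (2 * k) := by
    simpa [← two_mul] using
      two_mul_rank_le_card_of_transpose_mul_mul_eq_zero (isUnit_det_Omega _) hiso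
  set T := toLinAlgEquiv' M
  have hNT (j : ℕ) : toLinAlgEquiv' (N ^ j) = (T ^ 2 + β ^ 2 • 1) ^ j := by simp [N, T]
  have hlower : 2 * (2 * k - k) ≤ (N ^ k).rank := by
    have hnilpT : (T ^ 2 + β ^ 2 • 1) ^ (2 * k) = 0 := by rw [← hNT, hnilp, map_zero]
    have hnontrivT : (T ^ 2 + β ^ 2 • 1) ^ (2 * k - 1) ≠ 0 := by
      rwa [← hNT, map_ne_zero_iff _ toLinAlgEquiv'.injective]
    have := Module.End.two_mul_sub_le_finrank_range_pow hnilpT hnontrivT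
      (Module.End.even_finrank_ker_inf_range_pow T (by positivity)) k
    rwa [← hNT] at this
  refine ⟨range (N ^ k).mulVecLin, by change (N ^ k).rank = 2 * k; omega,
    fun u hu v hv => dotProduct_mulVec_eq_zero_of_transpose_mul_mul_eq_zero hiso hu hv, ?_⟩
  have hMN : Commute M (N ^ k) :=
    (((Commute.refl M).pow_right 2).add_right ((Commute.one_right M).smul_right _)).pow_right k
  rintro _ ⟨a, rfl⟩
  exact ⟨M *ᵥ a, by simp only [mulVecLin_apply, mulVec_mulVec, hMN.eq]⟩

theorem exists_invariant_lagrangian_of_even_jordan_pair {k : ℕ} (hk : 1 ≤ k)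
    (β : ℝ) (hβ : β ≠ 0)
    (M : Matrix (Fin (2 * k) ⊕ Fin (2 * k)) (Fin (2 * k) ⊕ Fin (2 * k)) ℝ)
    (hham : (Omega (2 * k) * M)ᵀ = Omega (2 * k) * M)
    (hnilp : (M ^ 2 + (β ^ 2) • (1 : Matrix (Fin (2 * k) ⊕ Fin (2 * k))
        (Fin (2 * k) ⊕ Fin (2 * k)) ℝ)) ^ (2 * k) = 0)
    (hnontriv : (M ^ 2 + (β ^ 2) • (1 : Matrix (Fin (2 * k) ⊕ Fin (2 * k))
        (Fin (2 * k) ⊕ Fin (2 * k)) ℝ)) ^ (2 * k - 1) ≠ 0) :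
    ∃ Γ : Submodule ℝ (Fin (2 * k) ⊕ Fin (2 * k) → ℝ),
      Module.finrank ℝ Γ = 2 * k ∧
      (∀ u ∈ Γ, ∀ v ∈ Γ, u ⬝ᵥ (Omega (2 * k)).mulVec v = 0) ∧
      (∀ u ∈ Γ, M.mulVec u ∈ Γ) :=
  exists_invariant_lagrangian_of_even_jordan_pair_general β hβ M hham hnilp hnontriv
end

section
/- Fix an integer k ≥ 1 and a real number β ≠ 0. Let M be a real (4k+2)×(4k+2) Hamiltonian matrix (with respect to Ω = [[0, I_{2k+1}],[−I_{2k+1}, 0]]) such that (M² + β²·I)^{2k+1} = 0 and (M² + β²·I)^{2k} ≠ 0 (so that over ℂ, M consists of a pair of Jordan blocks of odd order 2k+1 with eigenvalues ±iβ). Then there exists a subspace Γ ⊆ ℝ^{4k+2} with dim Γ = 2k, uᵀ·Ω·v = 0 for all u, v ∈ Γ (Γ is isotropic), and M·Γ ⊆ Γ. -/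
open Matrix

/-! With `N = M² + β²`, each `ker N^j` is `M`-invariant and `M` restricted to it has `M² + β²`
nilpotent, so `det(M|)² = det(N| - β²) = (-β²)^(dim ker N^j)` forces `dim ker N^j` to be even. As
`N^(2k) ≠ 0 = N^(2k+1)`, these dimensions increase strictly from `0` to `4k+2` in `2k+1` steps, so
`dim ker N^j = 2j`, and `Γ = range N^(k+1)` has dimension `2k`. It is `M`-invariant because `N` is
a polynomial in `M`, and isotropic because the Hamiltonian condition makes `N` self-adjoint for
`Ω`: `(N^(k+1) u)ᵀ Ω N^(k+1) v = uᵀ Ω N^(2k+2) v = 0`. -/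

open Module LinearMap

theorem Commute.self_sq_add_smul_one_pow {R A : Type*} [CommSemiring R] [Semiring A]
    [Algebra R A] (a : A) (c : R) (j : ℕ) : Commute a ((a ^ 2 + c • 1) ^ j) :=
  ((Commute.self_pow a 2).add_right ((Commute.one_right a).smul_right c)).pow_right j

theorem Nat.eq_two_mul_of_add_two_le_succ {d : ℕ → ℕ} {n : ℕ} (h0 : d 0 = 0)
    (hn : d n = 2 * n) (hstep : ∀ j < n, d j + 2 ≤ d (j + 1)) {j : ℕ} (hj : j ≤ n) :
    d j = 2 * j := by
  have hgrowth : ∀ i l, i ≤ l → l ≤ n → d i + 2 * (l - i) ≤ d l := by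
    intro i l hil hl
    induction l, hil using Nat.le_induction with
    | base => simp
    | succ l hil ih =>
      have hstep_l := hstep l (by omega)
      have hih := ih (by omega)
      omega
  have hlower := hgrowth 0 j (Nat.zero_le j) hj
  have hupper := hgrowth j n hj le_rfl
  omega

theorem Module.End.ker_pow_lt_ker_pow_succ {K V : Type*} [DivisionRing K] [AddCommGroup V]
    [Module K V] {g : End K V} {m j : ℕ} (hnil : g ^ (m + 1) = 0) (hm : g ^ m ≠ 0)
    (hj : j ≤ m) : ker (g ^ j) < ker (g ^ (j + 1)) := by
  refine lt_of_le_of_ne (pow_succ' g j ▸ ker_le_ker_comp (g ^ j) g) fun heq => hm ?_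
  have hconst := Module.End.ker_pow_constant heq
  rw [← ker_eq_top, ← Nat.add_sub_cancel' hj, ← hconst, hconst (m + 1 - j),
    Nat.add_sub_cancel' (by omega), hnil, ker_zero]

section

variable {V : Type*} [AddCommGroup V] [Module ℝ V] [FiniteDimensional ℝ V]

theorem even_finrank_of_isNilpotent_sq_add_sq (f : End ℝ V) {β : ℝ} (hβ : β ≠ 0)
    (h : IsNilpotent (f ^ 2 + β ^ 2 • 1)) : Even (finrank ℝ V) := by
  have hdet : LinearMap.det (f ^ 2) = (-1) ^ finrank ℝ V * (β ^ 2) ^ finrank ℝ V := by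
    have hf : f ^ 2 = (-1 : ℝ) • (algebraMap ℝ (End ℝ V) (β ^ 2) - (f ^ 2 + β ^ 2 • 1)) := by
      rw [Algebra.algebraMap_eq_smul_one]; module
    rw [hf, LinearMap.det_smul, ← LinearMap.eval_charpoly, h.charpoly_eq_X_pow_finrank]
    simp
  by_contra hodd
  have hsq : 0 ≤ LinearMap.det (f ^ 2) := by rw [map_pow]; positivity
  rw [hdet, (Nat.not_even_iff_odd.mp hodd).neg_one_pow] at hsq
  have : 0 < (β ^ 2) ^ finrank ℝ V := by positivity
  linarith

theorem even_finrank_ker_pow_sq_add_sq (f : End ℝ V) {β : ℝ} (hβ : β ≠ 0) (j : ℕ) :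
    Even (finrank ℝ (ker ((f ^ 2 + β ^ 2 • 1) ^ j))) := by
  set p := ker ((f ^ 2 + β ^ 2 • 1) ^ j)
  have hfp : ∀ x ∈ p, f x ∈ p := fun x hx => by
    rw [mem_ker, ← Module.End.mul_apply, ← (Commute.self_sq_add_smul_one_pow f _ j).eq,
      Module.End.mul_apply, mem_ker.mp hx, map_zero]
  refine even_finrank_of_isNilpotent_sq_add_sq (f.restrict hfp) hβ ⟨j, ?_⟩
  have hrestrict : (f.restrict hfp) ^ 2 + β ^ 2 • 1 = (f ^ 2 + β ^ 2 • 1).restrict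
      (fun x hx => p.add_mem (Module.End.pow_apply_mem_of_forall_mem 2 hfp x hx)
        (p.smul_mem _ hx)) := by
    ext; simp [sq]
  rw [hrestrict, Module.End.pow_restrict]
  ext ⟨x, hx⟩
  exact mem_ker.mp hx

theorem finrank_ker_pow_sq_add_sq (f : End ℝ V) {β : ℝ} (hβ : β ≠ 0) {m : ℕ}
    (hnil : (f ^ 2 + β ^ 2 • 1) ^ (m + 1) = 0) (hm : (f ^ 2 + β ^ 2 • 1) ^ m ≠ 0)
    (hdim : finrank ℝ V = 2 * (m + 1)) {j : ℕ} (hj : j ≤ m + 1) :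
    finrank ℝ (ker ((f ^ 2 + β ^ 2 • 1) ^ j)) = 2 * j := by
  refine Nat.eq_two_mul_of_add_two_le_succ
    (d := fun j => finrank ℝ (ker ((f ^ 2 + β ^ 2 • 1) ^ j))) ?_ ?_ (fun i hi => ?_) hj
  · rw [pow_zero, Module.End.one_eq_id, ker_id, finrank_bot]
  · rw [hnil, ker_zero, finrank_top, hdim]
  · have hlt := Submodule.finrank_lt_finrank_of_lt
      (Module.End.ker_pow_lt_ker_pow_succ hnil hm (Nat.lt_succ_iff.mp hi))
    obtain ⟨a, ha⟩ := even_finrank_ker_pow_sq_add_sq f hβ i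
    obtain ⟨b, hb⟩ := even_finrank_ker_pow_sq_add_sq f hβ (i + 1)
    omega

end

section

variable {n R : Type*} [Fintype n] [DecidableEq n] [CommRing R] {J A : Matrix n n R}

theorem Matrix.transpose_sq_add_smul_one_mul_eq (hA : Aᵀ * J = -(J * A)) (c : R) :
    (A ^ 2 + c • 1)ᵀ * J = J * (A ^ 2 + c • 1) := by
  have hsq : Aᵀ ^ 2 * J = J * A ^ 2 := by
    rw [sq, sq, mul_assoc, hA, mul_neg, ← mul_assoc, hA, neg_mul, neg_neg, mul_assoc]
  rw [transpose_add, transpose_pow, transpose_smul, transpose_one, add_mul, mul_add, hsq,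
    Matrix.smul_mul, Matrix.mul_smul, one_mul, mul_one]

theorem Matrix.pow_mulVec_dotProduct_mulVec_pow_mulVec_eq_zero (hA : Aᵀ * J = J * A) {i l : ℕ}
    (h : A ^ (i + l) = 0) (x y : n → R) : (A ^ i *ᵥ x) ⬝ᵥ J *ᵥ (A ^ l *ᵥ y) = 0 := by
  have hpow : (A ^ i)ᵀ * J = J * A ^ i := by
    have hsemi : SemiconjBy J A Aᵀ := hA.symm
    rw [transpose_pow, (hsemi.pow_right i).eq]
  rw [dotProduct_mulVec, ← vecMul_transpose, vecMul_vecMul, hpow, ← dotProduct_mulVec,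
    mulVec_mulVec, mul_assoc, ← pow_add, h]
  simp

end

theorem exists_invariant_isotropic_of_odd_jordan_pair_general {k : ℕ}
    (β : ℝ) (hβ : β ≠ 0)
    (M : Matrix (Fin (2 * k + 1) ⊕ Fin (2 * k + 1)) (Fin (2 * k + 1) ⊕ Fin (2 * k + 1)) ℝ)
    (hham : (Omega (2 * k + 1) * M)ᵀ = Omega (2 * k + 1) * M)
    (hnilp : (M ^ 2 + (β ^ 2) • (1 : Matrix (Fin (2 * k + 1) ⊕ Fin (2 * k + 1))
        (Fin (2 * k + 1) ⊕ Fin (2 * k + 1)) ℝ)) ^ (2 * k + 1) = 0)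
    (hnontriv : (M ^ 2 + (β ^ 2) • (1 : Matrix (Fin (2 * k + 1) ⊕ Fin (2 * k + 1))
        (Fin (2 * k + 1) ⊕ Fin (2 * k + 1)) ℝ)) ^ (2 * k) ≠ 0) :
    ∃ Γ : Submodule ℝ (Fin (2 * k + 1) ⊕ Fin (2 * k + 1) → ℝ),
      Module.finrank ℝ Γ = 2 * k ∧
      (∀ u ∈ Γ, ∀ v ∈ Γ, u ⬝ᵥ (Omega (2 * k + 1)).mulVec v = 0) ∧
      (∀ u ∈ Γ, M.mulVec u ∈ Γ) := by
  set N := M ^ 2 + β ^ 2 • (1 : Matrix _ _ ℝ)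
  set f := toLinAlgEquiv' M
  have hNf (j : ℕ) : toLinAlgEquiv' (N ^ j) = (f ^ 2 + β ^ 2 • 1) ^ j := by simp [N, f]
  have hdim : finrank ℝ (Fin (2 * k + 1) ⊕ Fin (2 * k + 1) → ℝ) = 2 * (2 * k + 1) := by
    rw [finrank_fintype_fun_eq_card, Fintype.card_sum, Fintype.card_fin, ← two_mul]
  have hker : finrank ℝ (ker (toLinAlgEquiv' (N ^ (k + 1)))) = 2 * (k + 1) := by
    rw [hNf]
    refine finrank_ker_pow_sq_add_sq f hβ (m := 2 * k) ?_ ?_ hdim (by omega)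
    · rw [← hNf, hnilp, map_zero]
    · rw [← hNf]
      exact (map_ne_zero_iff _ toLinAlgEquiv'.injective).mpr hnontriv
  have hMΩ : Mᵀ * Omega (2 * k + 1) = -(Omega (2 * k + 1) * M) := by
    rw [← neg_eq_iff_eq_neg, ← mul_neg, ← Omega_transpose, ← transpose_mul, hham]
  refine ⟨range (toLinAlgEquiv' (N ^ (k + 1))), ?_, ?_, ?_⟩
  · have := finrank_range_add_finrank_ker (toLinAlgEquiv' (N ^ (k + 1)))
    omega
  · rintro _ ⟨x, rfl⟩ _ ⟨y, rfl⟩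
    rw [toLinAlgEquiv'_apply, toLinAlgEquiv'_apply]
    refine pow_mulVec_dotProduct_mulVec_pow_mulVec_eq_zero
      (transpose_sq_add_smul_one_mul_eq hMΩ _) ?_ x y
    rw [show k + 1 + (k + 1) = 2 * k + 1 + 1 by ring, pow_succ, hnilp, zero_mul]
  · rintro _ ⟨x, rfl⟩
    refine ⟨M *ᵥ x, ?_⟩
    rw [toLinAlgEquiv'_apply, toLinAlgEquiv'_apply, mulVec_mulVec, mulVec_mulVec,
      (Commute.self_sq_add_smul_one_pow M (β ^ 2) (k + 1)).eq]

theorem exists_invariant_isotropic_of_odd_jordan_pair {k : ℕ} (hk : 1 ≤ k)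
    (β : ℝ) (hβ : β ≠ 0)
    (M : Matrix (Fin (2 * k + 1) ⊕ Fin (2 * k + 1)) (Fin (2 * k + 1) ⊕ Fin (2 * k + 1)) ℝ)
    (hham : (Omega (2 * k + 1) * M)ᵀ = Omega (2 * k + 1) * M)
    (hnilp : (M ^ 2 + (β ^ 2) • (1 : Matrix (Fin (2 * k + 1) ⊕ Fin (2 * k + 1))
        (Fin (2 * k + 1) ⊕ Fin (2 * k + 1)) ℝ)) ^ (2 * k + 1) = 0)
    (hnontriv : (M ^ 2 + (β ^ 2) • (1 : Matrix (Fin (2 * k + 1) ⊕ Fin (2 * k + 1))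
        (Fin (2 * k + 1) ⊕ Fin (2 * k + 1)) ℝ)) ^ (2 * k) ≠ 0) :
    ∃ Γ : Submodule ℝ (Fin (2 * k + 1) ⊕ Fin (2 * k + 1) → ℝ),
      Module.finrank ℝ Γ = 2 * k ∧
      (∀ u ∈ Γ, ∀ v ∈ Γ, u ⬝ᵥ (Omega (2 * k + 1)).mulVec v = 0) ∧
      (∀ u ∈ Γ, M.mulVec u ∈ Γ) :=
  exists_invariant_isotropic_of_odd_jordan_pair_general β hβ M hham hnilp hnontriv
end

section
/- Let S : ℝ → M_n(ℝ) be a real-analytic family of symmetric n×n real matrices with S(0) = 0, such that S'(t) is positive semidefinite for all t in a neighborhood of 0, and such that S is ample at 0, i.e. there exists an integer N ≥ 1 such that for every z ∈ ℝⁿ, z ≠ 0, there is some i with 1 ≤ i ≤ N and S^{(i)}(0)·z ≠ 0. Let J ⊆ {1,…,n} be any index set and let S_J(t) denote the principal submatrix of S(t) with rows and columns in J. Then S_J is ample at 0: there exists an integer N' ≥ 1 such that for every y ∈ ℝ^J, y ≠ 0, there is some i with 1 ≤ i ≤ N' and S_J^{(i)}(0)·y ≠ 0 (moreover S_J'(t)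 is positive semidefinite, so the reduced curve is monotone and ample). -/
open Matrix

/-- The `i`-th derivative of a matrix-valued curve, computed entrywise. -/
noncomputable def matDeriv {m : Type*} (S : ℝ → Matrix m m ℝ) (i : ℕ) (t : ℝ) :
    Matrix m m ℝ :=
  Matrix.of fun a b => iteratedDeriv i (fun s => S s a b) t

/-- The principal submatrix of a matrix curve with rows and columns in `J`. -/
noncomputable def subCurve {n : ℕ} (S : ℝ → Matrix (Fin n) (Fin n) ℝ)
    (J : Finset (Fin n)) (t : ℝ) : Matrix J J ℝ :=
  (S t).submatrix (fun a : J => (a : Fin n)) (fun b : J => (b : Fin n))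

/-!
Extend `y ∈ ℝ^J` by zero to `z ∈ ℝⁿ`. If every derivative of `S_J` at `0` kills `y`, then the
analytic function `q(t) = zᵀ S(t) z` has `q⁽ⁱ⁾(0) = yᵀ S_J⁽ⁱ⁾(0) y = 0` for all `i ≥ 1`, so `q' ≡ 0`
near `0`. As `S'(t) ≥ 0`, `zᵀ S'(t) z = 0` forces `S'(t) z = 0`; hence `t ↦ S(t) z` is locally
constant and every derivative of `S` at `0` kills `z`, contradicting the ampleness of `S`.
A uniform order `N'` exists because the subspaces `⋂_{1 ≤ i ≤ k} ker S_J⁽ⁱ⁾(0)` form a descending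
chain, which stabilizes.
-/

open Filter Topology

theorem AnalyticAt.eventually_eq_zero_of_iteratedDeriv_eq_zero {𝕜 E : Type*}
    [NontriviallyNormedField 𝕜] [CharZero 𝕜] [NormedAddCommGroup E] [NormedSpace 𝕜 E]
    [CompleteSpace E] {f : 𝕜 → E} {x : 𝕜} (hf : AnalyticAt 𝕜 f x)
    (h : ∀ i, iteratedDeriv i f x = 0) : ∀ᶠ y in 𝓝 x, f y = 0 := by
  refine analyticOrderAt_eq_top.mp (ENat.eq_top_iff_forall_ge.mpr fun n => ?_)
  exact (natCast_le_analyticOrderAt_iff_iteratedDeriv_eq_zero hf).mpr fun i _ => h i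

theorem IsArtinian.exists_bound_of_forall_exists_ne_zero {R M N : Type*} [Semiring R]
    [AddCommMonoid M] [Module R M] [IsArtinian R M] [AddCommMonoid N] [Module R N]
    (A : ℕ → M →ₗ[R] N) (h : ∀ x ≠ 0, ∃ i, A i x ≠ 0) :
    ∃ k, ∀ x ≠ 0, ∃ i ≤ k, A i x ≠ 0 := by
  obtain ⟨k, hk⟩ := WellFoundedLT.antitone_chain_condition
    (f := fun k => ⨅ i ≤ k, LinearMap.ker (A i)) fun k l hkl => biInf_mono fun i hi => hi.trans hkl
  refine ⟨k, fun x hx => ?_⟩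
  by_contra! hxk
  obtain ⟨i, hi⟩ := h x hx
  have hmem : x ∈ ⨅ j ≤ max k i, LinearMap.ker (A j) := by
    rw [← hk _ (le_max_left k i)]
    simpa using hxk
  exact hi (by simpa using (Submodule.mem_iInf _).mp hmem i)

section

variable {m ι : Type*}

theorem extend_ne_zero {R : Type*} [Zero R] {e : ι → m} (he : e.Injective) {y : ι → R}
    (hy : y ≠ 0) : Function.extend e y 0 ≠ 0 :=
  fun h => hy (funext fun i => by simpa [he.extend_apply] using congrFun h (e i))

theorem extend_dotProduct {R : Type*} [NonUnitalNonAssocSemiring R] [Fintype m] [Fintype ι]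
    {e : ι → m} (he : e.Injective) (y : ι → R) (v : m → R) :
    Function.extend e y 0 ⬝ᵥ v = y ⬝ᵥ (v ∘ e) := by
  refine (Fintype.sum_of_injective e he _ _ (fun a ha => ?_) fun i => ?_).symm
  · rw [Function.extend_apply' _ _ _ (by simpa using ha), Pi.zero_apply, zero_mul]
  · rw [Function.comp_apply, he.extend_apply]

theorem extend_dotProduct_mulVec_extend {R : Type*} [CommSemiring R] [Fintype m] [Fintype ι]
    {e : ι → m} (he : e.Injective) (y : ι → R) (M : Matrix m m R) :
    Function.extend e y 0 ⬝ᵥ M *ᵥ Function.extend e y 0 = y ⬝ᵥ M.submatrix e e *ᵥ y := by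
  rw [extend_dotProduct he]
  congr 1
  ext i
  simp only [Function.comp_apply, mulVec, dotProduct_comm (M (e i)), extend_dotProduct he]
  exact dotProduct_comm _ _

theorem matDeriv_submatrix (S : ℝ → Matrix m m ℝ) (e : ι → m) (i : ℕ) (t : ℝ) :
    matDeriv (fun s => (S s).submatrix e e) i t = (matDeriv S i t).submatrix e e :=
  rfl

theorem contDiffAt_mulVec_apply [Fintype m] {S : ℝ → Matrix m m ℝ} {i : ℕ} {t : ℝ}
    (hS : ∀ a b, ContDiffAt ℝ i (fun s => S s a b) t) (v : m → ℝ) (a : m) :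
    ContDiffAt ℝ i (fun s => (S s *ᵥ v) a) t := by
  simp only [mulVec, dotProduct]
  fun_prop

theorem iteratedDeriv_mulVec_apply [Fintype m] {S : ℝ → Matrix m m ℝ} {i : ℕ} {t : ℝ}
    (hS : ∀ a b, ContDiffAt ℝ i (fun s => S s a b) t) (v : m → ℝ) (a : m) :
    iteratedDeriv i (fun s => (S s *ᵥ v) a) t = (matDeriv S i t *ᵥ v) a := by
  simp only [mulVec, dotProduct]
  rw [iteratedDeriv_fun_sum fun b _ => (hS a b).mul contDiffAt_const]
  simp only [iteratedDeriv_mul_const_field, matDeriv, of_apply]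

theorem iteratedDeriv_dotProduct_mulVec [Fintype m] {S : ℝ → Matrix m m ℝ} {i : ℕ} {t : ℝ}
    (hS : ∀ a b, ContDiffAt ℝ i (fun s => S s a b) t) (w v : m → ℝ) :
    iteratedDeriv i (fun s => w ⬝ᵥ S s *ᵥ v) t = w ⬝ᵥ matDeriv S i t *ᵥ v := by
  simp only [dotProduct]
  rw [iteratedDeriv_fun_sum fun a _ => contDiffAt_const.mul (contDiffAt_mulVec_apply hS v a)]
  simp only [iteratedDeriv_const_mul_field, iteratedDeriv_mulVec_apply hS]

theorem mulVec_matDeriv_eq_zero_of_dotProduct_mulVec_eq_zero [Fintype m] {S : ℝ → Matrix m m ℝ}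
    {t₀ : ℝ} (hS : ∀ a b, AnalyticAt ℝ (fun s => S s a b) t₀)
    (hmono : ∀ᶠ t in 𝓝 t₀, (matDeriv S 1 t).PosSemidef) {z : m → ℝ}
    (hz : ∀ i, 1 ≤ i → z ⬝ᵥ matDeriv S i t₀ *ᵥ z = 0) (i : ℕ) (hi : 1 ≤ i) :
    matDeriv S i t₀ *ᵥ z = 0 := by
  have hnear : ∀ᶠ t in 𝓝 t₀, ∀ a b, ContDiffAt ℝ 1 (fun s => S s a b) t := by
    simp only [eventually_all]
    exact fun a b => (hS a b).eventually_analyticAt.mono fun t h => h.contDiffAt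
  have hq : AnalyticAt ℝ (fun s => z ⬝ᵥ S s *ᵥ z) t₀ := by
    simp only [dotProduct, mulVec]
    fun_prop
  have hq' : ∀ᶠ t in 𝓝 t₀, deriv (fun s => z ⬝ᵥ S s *ᵥ z) t = 0 := by
    refine hq.deriv.eventually_eq_zero_of_iteratedDeriv_eq_zero fun j => ?_
    rw [← iteratedDeriv_succ', iteratedDeriv_dotProduct_mulVec fun a b => (hS a b).contDiffAt,
      hz _ j.succ_pos]
  have hker : ∀ᶠ t in 𝓝 t₀, matDeriv S 1 t *ᵥ z = 0 := by
    filter_upwards [hq', hmono, hnear] with t hqt hpsd hSt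
    rw [← iteratedDeriv_one, iteratedDeriv_dotProduct_mulVec hSt] at hqt
    exact (hpsd.dotProduct_mulVec_zero_iff z).mp (by rwa [star_trivial])
  obtain ⟨j, rfl⟩ := Nat.exists_eq_add_of_le' hi
  ext a
  have hderiv : deriv (fun s => (S s *ᵥ z) a) =ᶠ[𝓝 t₀] 0 := by
    filter_upwards [hker, hnear] with t hkt hSt
    rw [← iteratedDeriv_one, iteratedDeriv_mulVec_apply hSt, hkt]
    rfl
  rw [← iteratedDeriv_mulVec_apply fun a b => (hS a b).contDiffAt, iteratedDeriv_succ',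
    hderiv.iteratedDeriv_eq, iteratedDeriv_const_zero, Pi.zero_apply]

theorem exists_mulVec_matDeriv_submatrix_ne_zero [Fintype m] [Fintype ι] {S : ℝ → Matrix m m ℝ}
    {t₀ : ℝ} (hS : ∀ a b, AnalyticAt ℝ (fun s => S s a b) t₀)
    (hmono : ∀ᶠ t in 𝓝 t₀, (matDeriv S 1 t).PosSemidef)
    (hample : ∀ z ≠ 0, ∃ i, 1 ≤ i ∧ matDeriv S i t₀ *ᵥ z ≠ 0)
    {e : ι → m} (he : e.Injective) {y : ι → ℝ} (hy : y ≠ 0) :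
    ∃ i, 1 ≤ i ∧ matDeriv (fun t => (S t).submatrix e e) i t₀ *ᵥ y ≠ 0 := by
  by_contra! hy₀
  obtain ⟨i, hi, hne⟩ := hample _ (extend_ne_zero he hy)
  refine hne (mulVec_matDeriv_eq_zero_of_dotProduct_mulVec_eq_zero hS hmono (fun j hj => ?_) i hi)
  rw [extend_dotProduct_mulVec_extend he, ← matDeriv_submatrix, hy₀ j hj, dotProduct_zero]

end

theorem reduced_curve_monotone_ample_general {n : ℕ}
    (S : ℝ → Matrix (Fin n) (Fin n) ℝ)
    (hanalytic : ∀ a b : Fin n, ∀ t : ℝ, AnalyticAt ℝ (fun s => S s a b) t)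
    (δ : ℝ) (hδ : 0 < δ)
    (hmono : ∀ t : ℝ, |t| < δ → (matDeriv S 1 t).PosSemidef)
    (hample : ∃ N : ℕ, 1 ≤ N ∧ ∀ z : Fin n → ℝ, z ≠ 0 →
      ∃ i : ℕ, 1 ≤ i ∧ i ≤ N ∧ (matDeriv S i 0).mulVec z ≠ 0)
    (J : Finset (Fin n)) :
    (∃ N' : ℕ, 1 ≤ N' ∧ ∀ y : J → ℝ, y ≠ 0 →
      ∃ i : ℕ, 1 ≤ i ∧ i ≤ N' ∧ (matDeriv (subCurve S J) i 0).mulVec y ≠ 0) ∧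
    (∀ t : ℝ, |t| < δ → (matDeriv (subCurve S J) 1 t).PosSemidef) := by
  have hmono₀ : ∀ᶠ t in 𝓝 0, (matDeriv S 1 t).PosSemidef := by
    filter_upwards [Metric.ball_mem_nhds 0 hδ] with t ht using hmono t (by simpa using ht)
  obtain ⟨N, -, hample⟩ := hample
  have hsub (y : J → ℝ) (hy : y ≠ 0) :
      ∃ i, (matDeriv (subCurve S J) (i + 1) 0).mulVecLin y ≠ 0 := by
    obtain ⟨_ | i, hi, hne⟩ := exists_mulVec_matDeriv_submatrix_ne_zero
      (fun a b => hanalytic a b 0) hmono₀ (fun z hz => (hample z hz).imp fun i hi => ⟨hi.1, hi.2.2⟩)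
      Subtype.val_injective hy
    · omega
    · exact ⟨i, hne⟩
  obtain ⟨k, hk⟩ := IsArtinian.exists_bound_of_forall_exists_ne_zero _ hsub
  refine ⟨⟨k + 1, Nat.le_add_left 1 k, fun y hy => ?_⟩, fun t ht => (hmono t ht).submatrix _⟩
  obtain ⟨i, hik, hi⟩ := hk y hy
  exact ⟨i + 1, Nat.le_add_left 1 i, by omega, hi⟩

theorem reduced_curve_monotone_ample {n : ℕ} (hn : 1 ≤ n)
    (S : ℝ → Matrix (Fin n) (Fin n) ℝ)
    (hanalytic : ∀ a b : Fin n, ∀ t : ℝ, AnalyticAt ℝ (fun s => S s a b) t)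
    (hsymm : ∀ t : ℝ, (S t).IsSymm)
    (h0 : S 0 = 0)
    (δ : ℝ) (hδ : 0 < δ)
    (hmono : ∀ t : ℝ, |t| < δ → (matDeriv S 1 t).PosSemidef)
    (hample : ∃ N : ℕ, 1 ≤ N ∧ ∀ z : Fin n → ℝ, z ≠ 0 →
      ∃ i : ℕ, 1 ≤ i ∧ i ≤ N ∧ (matDeriv S i 0).mulVec z ≠ 0)
    (J : Finset (Fin n)) :
    (∃ N' : ℕ, 1 ≤ N' ∧ ∀ y : J → ℝ, y ≠ 0 →
      ∃ i : ℕ, 1 ≤ i ∧ i ≤ N' ∧ (matDeriv (subCurve S J) i 0).mulVec y ≠ 0) ∧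
    (∀ t : ℝ, |t| < δ → (matDeriv (subCurve S J) 1 t).PosSemidef) :=
  reduced_curve_monotone_ample_general S hanalytic δ hδ hmono hample J
end
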